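/- Let N be a positive integer, A an N×N real skew-symmetric matrix, b ∈ ℝ^N and ε ∈ ℝ. For x ∈ ℝ^N set d_i(x,ε) = 1 − ε b_i − ε Σ_j a_{ij} x_j, let M(x,ε) be the N×N matrix with diagonal entries M_{ii} = d_i(x,ε) and off-diagonal entries M_{ij} = −ε x_i a_{ij} (i ≠ j), and on the set where M(x,ε) is invertible define f(x) = M(x,ε)⁻¹ (𝟙 + ε·diag(b)) x. Then for every x with all coordinates x_i ≠ 0, all d_i(x,ε) ≠ 0 and M(x,ε), M(f(x),ε) invertible and all coordinates f_i(x) ≠ 0, f is differentiable at x and det(Df(x)) = (f₁(x)·f₂(x)⋯f_N(x)) / (x₁·x₂⋯x_N); equivalently, the volume form dx₁∧…∧dx_N/(x₁x₂⋯x_N) is invariant under f. -/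

import Mathlib

open Matrix

/-- `dᵢ(x,ε) = 1 - ε bᵢ - ε ∑ⱼ aᵢⱼ xⱼ`. -/
noncomputable def lvD (N : ℕ) (A : Matrix (Fin N) (Fin N) ℝ) (b : Fin N → ℝ)
    (ε : ℝ) (x : Fin N → ℝ) (i : Fin N) : ℝ :=
  1 - ε * b i - ε * ∑ j, A i j * x j

/-- The matrix `M(x,ε)` of the Kahan discretization of the Lotka–Volterra type
system: diagonal entries `dᵢ(x,ε)`, off-diagonal entries `-ε xᵢ aᵢⱼ`. -/
noncomputable def lvM (N : ℕ) (A : Matrix (Fin N) (Fin N) ℝ) (b : Fin N → ℝ)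
    (ε : ℝ) (x : Fin N → ℝ) : Matrix (Fin N) (Fin N) ℝ :=
  Matrix.of fun i j => if i = j then lvD N A b ε x i else -(ε * x i * A i j)

/-- The Kahan map `f(x) = M(x,ε)⁻¹ (𝟙 + ε·diag(b)) x`. -/
noncomputable def lvF (N : ℕ) (A : Matrix (Fin N) (Fin N) ℝ) (b : Fin N → ℝ)
    (ε : ℝ) (x : Fin N → ℝ) : Fin N → ℝ :=
  (lvM N A b ε x)⁻¹ *ᵥ ((1 + ε • Matrix.diagonal b) *ᵥ x)

/-! Writing `C = 1 + ε • diagonal b`, the Kahan map is defined by `M(x,ε) f(x) = C x`, where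
`M(y,ε) = 1 - ε • diagonal b + L(y)` with `L` linear and symmetric in the sense `L(v) w = L(w) v`.
Differentiating the defining equation therefore gives `M(x,ε) Df(x) = C - L(f(x)) = M(f(x),-ε)`.
On the other hand, skew-symmetry of `A` and the defining equation give
`M(x,ε) diag f(x) = (M(f(x),-ε) diag x)ᵀ`, so `det M(f(x),-ε) / det M(x,ε) = ∏ fᵢ(x) / ∏ xᵢ`. -/

section MatrixInverseDeriv

attribute [local instance] Matrix.linftyOpNormedAddCommGroup Matrix.linftyOpNormedRing
  Matrix.linftyOpNormedAlgebra

variable {𝕜 n E : Type*} [RCLike 𝕜] [Fintype n] [DecidableEq n] [NormedAddCommGroup E]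
  [NormedSpace 𝕜 E]

noncomputable def Matrix.mulVecBilinL : Matrix n n 𝕜 →L[𝕜] (n → 𝕜) →L[𝕜] n → 𝕜 :=
  (mulVecBilin 𝕜 𝕜).mkContinuous₂ 1 fun M v => by simpa using linfty_opNorm_mulVec M v

theorem HasFDerivAt.matrix_inv_mulVec {M : E → Matrix n n 𝕜} {M' : E →L[𝕜] Matrix n n 𝕜}
    {c : E → n → 𝕜} {c' L : E →L[𝕜] n → 𝕜} {x : E} (hM : HasFDerivAt M M' x)
    (hc : HasFDerivAt c c' x) (hx : IsUnit (M x))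
    (hL : ∀ v, M x *ᵥ L v + M' v *ᵥ ((M x)⁻¹ *ᵥ c x) = c' v) :
    HasFDerivAt (fun y => (M y)⁻¹ *ᵥ c y) L x := by
  obtain ⟨u, hu⟩ := hx
  have hinv : HasFDerivAt (fun y => (M y)⁻¹)
      ((-ContinuousLinearMap.mulLeftRight 𝕜 _ (M x)⁻¹ (M x)⁻¹).comp M') x := by
    have h := hasFDerivAt_ringInverse (𝕜 := 𝕜) u
    rw [coe_units_inv, hu] at h
    rw [show (fun y => (M y)⁻¹) = Ring.inverse ∘ M from
      funext fun y => nonsing_inv_eq_ringInverse _]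
    exact h.comp x hM
  have hdet : IsUnit (M x).det := (isUnit_iff_isUnit_det _).mp (hu ▸ u.isUnit)
  have hLv : ∀ v, L v = (M x)⁻¹ *ᵥ (c' v - M' v *ᵥ ((M x)⁻¹ *ᵥ c x)) := fun v => by
    rw [← hL, add_sub_cancel_right, mulVec_mulVec, nonsing_inv_mul _ hdet, one_mulVec]
  have h := (mulVecBilinL.hasFDerivAt.comp x hinv).clm_apply hc
  refine h.congr_fderiv (ContinuousLinearMap.ext fun v => ?_)
  show (M x)⁻¹ *ᵥ c' v + (-((M x)⁻¹ * M' v * (M x)⁻¹)) *ᵥ c x = L v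
  rw [hLv, mulVec_sub, neg_mulVec, ← mulVec_mulVec, ← mulVec_mulVec, sub_eq_add_neg]

end MatrixInverseDeriv

theorem Matrix.apply_self_eq_zero_of_transpose_eq_neg {n G : Type*} [AddGroup G]
    [IsAddTorsionFree G] {A : Matrix n n G} (hA : Aᵀ = -A) (i : n) : A i i = 0 :=
  self_eq_neg.mp (by simpa using congrFun₂ hA i i)

theorem Matrix.diagonal_mulVec_eq_mul {n R : Type*} [Fintype n] [DecidableEq n]
    [NonUnitalNonAssocSemiring R] (v w : n → R) : diagonal v *ᵥ w = v * w :=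
  funext (mulVec_diagonal v w)

section KahanLotkaVolterra

variable {N : ℕ} {A : Matrix (Fin N) (Fin N) ℝ} {b : Fin N → ℝ} {ε : ℝ}

variable (N A ε) in
noncomputable def lvMLin : (Fin N → ℝ) →ₗ[ℝ] Matrix (Fin N) (Fin N) ℝ :=
  -ε • (diagonalLinearMap (Fin N) ℝ ℝ ∘ₗ A.mulVecLin +
    LinearMap.mulRight ℝ A ∘ₗ diagonalLinearMap (Fin N) ℝ ℝ)

theorem lvMLin_apply (v : Fin N → ℝ) :
    lvMLin N A ε v = -ε • (diagonal (A *ᵥ v) + diagonal v * A) := rfl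

theorem lvMLin_neg : lvMLin N A (-ε) = -lvMLin N A ε := by
  refine LinearMap.ext fun v => ?_
  rw [LinearMap.neg_apply, lvMLin_apply, lvMLin_apply, neg_smul]

theorem lvMLin_mulVec (v w : Fin N → ℝ) :
    lvMLin N A ε v *ᵥ w = -ε • ((A *ᵥ v) * w + v * (A *ᵥ w)) := by
  rw [lvMLin_apply, smul_mulVec, add_mulVec, ← mulVec_mulVec, diagonal_mulVec_eq_mul,
    diagonal_mulVec_eq_mul]

theorem lvMLin_mulVec_comm (v w : Fin N → ℝ) :
    lvMLin N A ε v *ᵥ w = lvMLin N A ε w *ᵥ v := by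
  rw [lvMLin_mulVec, lvMLin_mulVec, add_comm (A *ᵥ v * w), mul_comm v, mul_comm (A *ᵥ v)]

theorem lvD_apply (y : Fin N → ℝ) (i : Fin N) :
    lvD N A b ε y i = 1 - ε * b i - ε * (A *ᵥ y) i := rfl

theorem lvM_eq (hA : ∀ i, A i i = 0) (y : Fin N → ℝ) :
    lvM N A b ε y = 1 - ε • diagonal b + lvMLin N A ε y := by
  ext i j
  rcases eq_or_ne i j with rfl | hij
  · simp only [lvM, lvD_apply, of_apply, if_pos, lvMLin_apply, smul_add, neg_smul,
      Matrix.add_apply, Matrix.sub_apply, one_apply_eq, Matrix.smul_apply, diagonal_apply_eq,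
      smul_eq_mul, Matrix.neg_apply, diagonal_mul, hA, mul_zero]
    ring
  · simp [lvM, lvMLin_apply, hij, one_apply_ne hij, mul_assoc]

theorem lvM_mulVec (hA : ∀ i, A i i = 0) (y v : Fin N → ℝ) :
    lvM N A b ε y *ᵥ v = v - ε • (b * v) - ε • ((A *ᵥ y) * v + y * (A *ᵥ v)) := by
  rw [lvM_eq hA, add_mulVec, sub_mulVec, one_mulVec, smul_mulVec, diagonal_mulVec_eq_mul,
    lvMLin_mulVec, neg_smul, ← sub_eq_add_neg]

theorem lvM_neg_mulVec_add_lvMLin_mulVec (hA : ∀ i, A i i = 0) (z v : Fin N → ℝ) :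
    lvM N A b (-ε) z *ᵥ v + lvMLin N A ε v *ᵥ z = (1 + ε • diagonal b) *ᵥ v := by
  rw [lvM_eq hA, lvMLin_neg, lvMLin_mulVec_comm, add_mulVec, LinearMap.neg_apply, neg_mulVec,
    neg_add_cancel_right, neg_smul, sub_neg_eq_add]

theorem lvM_mulVec_lvF {x : Fin N → ℝ} (hM : IsUnit (lvM N A b ε x)) :
    lvM N A b ε x *ᵥ lvF N A b ε x = (1 + ε • diagonal b) *ᵥ x := by
  rw [lvF, mulVec_mulVec, mul_nonsing_inv _ ((isUnit_iff_isUnit_det _).mp hM), one_mulVec]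

theorem lvD_mul_eq_of_lvM_mulVec (hA : ∀ i, A i i = 0) {y z : Fin N → ℝ}
    (h : lvM N A b ε y *ᵥ z = (1 + ε • diagonal b) *ᵥ y) (i : Fin N) :
    lvD N A b ε y i * z i = lvD N A b (-ε) z i * y i := by
  have hi := congrFun h i
  rw [lvM_mulVec hA, add_mulVec, one_mulVec, smul_mulVec, diagonal_mulVec_eq_mul] at hi
  simp only [Pi.add_apply, Pi.sub_apply, Pi.smul_apply, Pi.mul_apply, smul_eq_mul] at hi
  rw [lvD_apply, lvD_apply]
  linear_combination hi

theorem lvM_mul_diagonal_eq_transpose (hA : Aᵀ = -A) {y z : Fin N → ℝ}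
    (h : lvM N A b ε y *ᵥ z = (1 + ε • diagonal b) *ᵥ y) :
    lvM N A b ε y * diagonal z = (lvM N A b (-ε) z * diagonal y)ᵀ := by
  ext i j
  rw [transpose_apply, mul_diagonal, mul_diagonal]
  rcases eq_or_ne i j with rfl | hij
  · simpa [lvM] using
      lvD_mul_eq_of_lvM_mulVec (apply_self_eq_zero_of_transpose_eq_neg hA) h i
  · have hAji : A j i = -A i j := by simpa using congrFun₂ hA i j
    simp only [lvM, of_apply, hij, hij.symm, if_false, hAji]
    ring

theorem det_lvM_mul_prod_eq (hA : Aᵀ = -A) {y z : Fin N → ℝ}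
    (h : lvM N A b ε y *ᵥ z = (1 + ε • diagonal b) *ᵥ y) :
    (lvM N A b ε y).det * ∏ i, z i = (lvM N A b (-ε) z).det * ∏ i, y i := by
  simpa [det_mul, mul_comm] using congrArg det (lvM_mul_diagonal_eq_transpose hA h)

attribute [local instance] Matrix.linftyOpNormedAddCommGroup Matrix.linftyOpNormedRing
  Matrix.linftyOpNormedAlgebra

theorem hasFDerivAt_lvF (hA : ∀ i, A i i = 0) {x : Fin N → ℝ} (hM : IsUnit (lvM N A b ε x)) :
    HasFDerivAt (lvF N A b ε) (LinearMap.toContinuousLinearMap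
      (toLin' ((lvM N A b ε x)⁻¹ * lvM N A b (-ε) (lvF N A b ε x)))) x := by
  have hlvM : HasFDerivAt (lvM N A b ε) (LinearMap.toContinuousLinearMap (lvMLin N A ε)) x := by
    rw [funext (lvM_eq hA)]
    exact (LinearMap.toContinuousLinearMap _).hasFDerivAt.const_add _
  refine hlvM.matrix_inv_mulVec (c := ((1 + ε • diagonal b) *ᵥ ·))
    (LinearMap.toContinuousLinearMap (mulVecLin (1 + ε • diagonal b))).hasFDerivAt hM fun v => ?_
  rw [LinearMap.coe_toContinuousLinearMap', toLin'_apply, mulVec_mulVec,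
    mul_nonsing_inv_cancel_left _ _ ((isUnit_iff_isUnit_det _).mp hM)]
  exact lvM_neg_mulVec_add_lvMLin_mulVec hA _ v

end KahanLotkaVolterra

theorem lotkaVolterra_kahan_invariant_measure (N : ℕ)
    (A : Matrix (Fin N) (Fin N) ℝ) (hA : Aᵀ = -A) (b : Fin N → ℝ) (ε : ℝ)
    (x : Fin N → ℝ)
    (hx : ∀ i, x i ≠ 0)
    (hM : IsUnit (lvM N A b ε x)) :
    DifferentiableAt ℝ (lvF N A b ε) x ∧
      (fderiv ℝ (lvF N A b ε) x).det
        = (∏ i, lvF N A b ε x i) / (∏ i, x i) := by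
  have hF := hasFDerivAt_lvF (apply_self_eq_zero_of_transpose_eq_neg hA) hM
  refine ⟨hF.differentiableAt, ?_⟩
  have hdetM : (lvM N A b ε x).det ≠ 0 := ((isUnit_iff_isUnit_det _).mp hM).ne_zero
  have hprod : ∏ i, x i ≠ 0 := Finset.prod_ne_zero_iff.mpr fun i _ => hx i
  rw [hF.fderiv, LinearMap.det_toContinuousLinearMap, LinearMap.det_toLin', det_mul,
    det_nonsing_inv, Ring.inverse_eq_inv', eq_div_iff hprod]
  field_simp
  linear_combination (det_lvM_mul_prod_eq hA (lvM_mulVec_lvF hM)).symm
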